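/- Let D ⊆ ℝⁿ be open with 0 ∈ D and consider ẋ = f(x), f locally Lipschitz, f(0) = 0. Assume: (i) local exponential stability: there exist ρ, ω > 0 and M ≥ 1 such that any solution with |x(0)| ≤ ρ satisfies |x(t)| ≤ M·e^{−ωt}|x(0)| for all t ≥ 0; (ii) uniform global asymptotic stability: there exist σ ∈ KL and a continuous function φ : D → ℝ≥0 with φ(0) = 0 and all sublevel sets {x ∈ D : φ(x) ≤ r} (for r > inf φ(D)) compact, such that every solution satisfies |x(t)| ≤ σ(φ(x(0)), t) for all t ≥ 0. Then there exists a continuous function κ : D → ℝ≥0 with κ(0) = 0 and compact sublevel sets, such that every solution satisfies |x(t)| ≤ e^{−ωt}·κ(x(0)) for all t ≥ 0. -/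

import Mathlib

def ClassK (a : ℝ → ℝ) : Prop :=
  ContinuousOn a (Set.Ici 0) ∧ StrictMonoOn a (Set.Ici 0) ∧ a 0 = 0

def ClassKInf (a : ℝ → ℝ) : Prop :=
  ClassK a ∧ Filter.Tendsto a Filter.atTop Filter.atTop

def ClassKL (σ : ℝ → ℝ → ℝ) : Prop :=
  ContinuousOn (fun p : ℝ × ℝ => σ p.1 p.2) (Set.Ici 0 ×ˢ Set.Ici 0) ∧
  (∀ t ≥ (0:ℝ), StrictMonoOn (fun s => σ s t) (Set.Ici 0) ∧ σ 0 t = 0) ∧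
  (∀ s ≥ (0:ℝ), AntitoneOn (fun t => σ s t) (Set.Ici 0) ∧
    Filter.Tendsto (fun t => σ s t) Filter.atTop (nhds 0))

/-- A solution of the system `ẋ = f(x)` remaining in `D` for all `t ≥ 0`. -/
def IsSolution {n : ℕ} (f : EuclideanSpace ℝ (Fin n) → EuclideanSpace ℝ (Fin n))
    (D : Set (EuclideanSpace ℝ (Fin n))) (x : ℝ → EuclideanSpace ℝ (Fin n)) : Prop :=
  (∀ t ≥ (0:ℝ), x t ∈ D) ∧ ∀ t ≥ (0:ℝ), HasDerivAt x (f (x t)) t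

/-!
Once a trajectory starting at `x₀` has entered the ball of radius `ρ`, local exponential
stability takes over; by the KL bound this happens at the latest at a time `T(φ x₀)` with
`σ(φ x₀, T) ≤ ρ`. Before that time `‖x t‖ ≤ σ(φ x₀, 0)`, so
`‖x t‖ ≤ e^{-ω t} · M e^{ω T(φ x₀)} σ(φ x₀, 0)` for all `t ≥ 0`. The first hitting time of
`σ(s, ·) ≤ ρ` is only monotone in `s`, so it is replaced by a continuous majorant (a moving
average), and adding `φ` to the gain makes its sublevel sets compact.
-/

open Real

theorem Monotone.exists_continuous_gt {τ : ℝ → ℝ} (hτ : Monotone τ) :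
    ∃ H : ℝ → ℝ, Continuous H ∧ ∀ s, τ s < H s := by
  have hint : ∀ a b : ℝ, IntervalIntegrable τ MeasureTheory.volume a b :=
    fun _ _ => hτ.intervalIntegrable
  refine ⟨fun s => (∫ u in s..s + 1, τ u) + 1, ?_, fun s => ?_⟩
  · have hprim := intervalIntegral.continuous_primitive hint 0
    have hdiff : (fun s => ∫ u in s..s + 1, τ u)
        = fun s => (∫ u in (0:ℝ)..s + 1, τ u) - ∫ u in (0:ℝ)..s, τ u := by
      funext s
      rw [intervalIntegral.integral_interval_sub_left (hint 0 (s + 1)) (hint 0 s)]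
    refine Continuous.add ?_ continuous_const
    rw [hdiff]
    exact (hprim.comp (continuous_add_const 1)).sub hprim
  · have hle : τ s ≤ ∫ u in s..s + 1, τ u := by
      calc τ s = ∫ _ in s..s + 1, τ s := by simp
        _ ≤ ∫ u in s..s + 1, τ u :=
          intervalIntegral.integral_mono_on (by linarith) intervalIntegrable_const
            (hint s (s + 1)) fun u hu => hτ hu.1
    linarith

namespace ClassKL

variable {σ : ℝ → ℝ → ℝ}

theorem zero_left (hσ : ClassKL σ) {t : ℝ} (ht : 0 ≤ t) : σ 0 t = 0 :=
  (hσ.2.1 t ht).2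

theorem monotone_left (hσ : ClassKL σ) {t s s' : ℝ} (ht : 0 ≤ t) (hs : 0 ≤ s) (hss' : s ≤ s') :
    σ s t ≤ σ s' t :=
  (hσ.2.1 t ht).1.monotoneOn hs (hs.trans hss') hss'

theorem antitone_right (hσ : ClassKL σ) {s t t' : ℝ} (hs : 0 ≤ s) (ht : 0 ≤ t) (htt' : t ≤ t') :
    σ s t' ≤ σ s t :=
  (hσ.2.2 s hs).1 ht (ht.trans htt') htt'

theorem nonneg (hσ : ClassKL σ) {s t : ℝ} (hs : 0 ≤ s) (ht : 0 ≤ t) : 0 ≤ σ s t :=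
  hσ.zero_left ht ▸ hσ.monotone_left ht le_rfl hs

theorem continuousOn_zero_right (hσ : ClassKL σ) : ContinuousOn (fun s => σ s 0) (Set.Ici 0) :=
  hσ.1.comp (continuous_id.prodMk continuous_const).continuousOn
    fun _ hs => Set.mk_mem_prod hs Set.self_mem_Ici

theorem exists_le (hσ : ClassKL σ) {ρ : ℝ} (hρ : 0 < ρ) {s : ℝ} (hs : 0 ≤ s) :
    ∃ t ≥ 0, σ s t ≤ ρ := by
  obtain ⟨t, ht0, htρ⟩ := ((Filter.eventually_ge_atTop 0).and
    (((hσ.2.2 s hs).2).eventually (gt_mem_nhds hρ))).exists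
  exact ⟨t, ht0, htρ.le⟩

theorem exists_continuous_settlingTime (hσ : ClassKL σ) {ρ : ℝ} (hρ : 0 < ρ) :
    ∃ T : ℝ → ℝ, Continuous T ∧ ∀ s ≥ 0, 0 ≤ T s ∧ σ s (T s) ≤ ρ := by
  set S : ℝ → Set ℝ := fun s => {t | 0 ≤ t ∧ σ (max s 0) t ≤ ρ}
  have hne : ∀ s, (S s).Nonempty := fun s => hσ.exists_le hρ (le_max_right s 0)
  have hbdd : ∀ s, BddBelow (S s) := fun _ => ⟨0, fun _ ht => ht.1⟩
  have hmono : Monotone fun s => sInf (S s) := fun a b hab =>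
    csInf_le_csInf (hbdd a) (hne b) fun t ht =>
      ⟨ht.1, (hσ.monotone_left ht.1 (le_max_right a 0) (max_le_max_right 0 hab)).trans ht.2⟩
  obtain ⟨T, hTc, hlt⟩ := hmono.exists_continuous_gt
  refine ⟨T, hTc, fun s hs => ?_⟩
  obtain ⟨t, ⟨ht0, htρ⟩, htT⟩ := exists_lt_of_csInf_lt (hne s) (hlt s)
  rw [max_eq_left hs] at htρ
  exact ⟨ht0.trans htT.le, (hσ.antitone_right hs ht0 htT.le).trans htρ⟩

end ClassKL

theorem IsSolution.comp_add_const {n : ℕ} {f : EuclideanSpace ℝ (Fin n) → EuclideanSpace ℝ (Fin n)}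
    {D : Set (EuclideanSpace ℝ (Fin n))} {x : ℝ → EuclideanSpace ℝ (Fin n)}
    (hx : IsSolution f D x) {T : ℝ} (hT : 0 ≤ T) : IsSolution f D fun u => x (u + T) :=
  ⟨fun u hu => hx.1 (u + T) (by linarith),
    fun u hu => (hx.2 (u + T) (by linarith)).comp_add_const u T⟩

theorem norm_le_exp_of_enters_ball {n : ℕ} {f : EuclideanSpace ℝ (Fin n) → EuclideanSpace ℝ (Fin n)}
    {D : Set (EuclideanSpace ℝ (Fin n))} {ρ ω M : ℝ} (hω : 0 ≤ ω) (hM : 1 ≤ M)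
    (hLES : ∀ x : ℝ → EuclideanSpace ℝ (Fin n), IsSolution f D x → ‖x 0‖ ≤ ρ →
      ∀ t ≥ (0:ℝ), ‖x t‖ ≤ M * Real.exp (-ω * t) * ‖x 0‖)
    {x : ℝ → EuclideanSpace ℝ (Fin n)} (hx : IsSolution f D x) {T b : ℝ} (hT : 0 ≤ T)
    (hxT : ‖x T‖ ≤ ρ) (hb : ∀ t ≥ 0, ‖x t‖ ≤ b) {t : ℝ} (ht : 0 ≤ t) :
    ‖x t‖ ≤ exp (-ω * t) * (M * exp (ω * T) * b) := by
  have hb0 : 0 ≤ b := (norm_nonneg _).trans (hb 0 le_rfl)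
  have hgain : exp (-ω * t) * (M * exp (ω * T) * b) = M * exp (-ω * (t - T)) * b := by
    rw [mul_sub, ← mul_assoc, mul_comm (exp _), mul_assoc M, ← exp_add]
    ring_nf
  rw [hgain]
  rcases le_total t T with htT | hTt
  · have hone : 1 ≤ M * exp (-ω * (t - T)) :=
      one_le_mul_of_one_le_of_one_le hM (one_le_exp (by nlinarith))
    exact (hb t ht).trans (le_mul_of_one_le_left hb0 hone)
  · have hshift := hLES _ (hx.comp_add_const hT) (by simpa using hxT) (t - T) (by linarith)
    simp only [sub_add_cancel, zero_add] at hshift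
    exact hshift.trans (by gcongr; exact hb T hT)

theorem isCompact_sublevel_of_le {X : Type*} [TopologicalSpace X] [T2Space X] {D : Set X}
    {φ κ : X → ℝ} (hφ : ∀ r : ℝ, (∃ x ∈ D, φ x < r) → IsCompact {x ∈ D | φ x ≤ r})
    (hκ : ContinuousOn κ D) (hle : ∀ x ∈ D, φ x ≤ κ x) (r : ℝ) (hr : ∃ x ∈ D, κ x < r) :
    IsCompact {x ∈ D | κ x ≤ r} := by
  obtain ⟨w, hwD, hwr⟩ := hr
  have hK := hφ r ⟨w, hwD, (hle w hwD).trans_lt hwr⟩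
  have hsub : {x ∈ D | κ x ≤ r} = {x ∈ D | φ x ≤ r} ∩ κ ⁻¹' Set.Iic r := by
    ext x
    exact ⟨fun h => ⟨⟨h.1, (hle x h.1).trans h.2⟩, h.2⟩, fun h => ⟨h.1.1, h.2⟩⟩
  rw [hsub]
  exact hK.of_isClosed_subset
    ((hκ.mono fun _ hx => hx.1).preimage_isClosed_of_isClosed hK.isClosed isClosed_Iic)
    Set.inter_subset_left

theorem stmt19_general (n : ℕ) (D : Set (EuclideanSpace ℝ (Fin n)))
    (f : EuclideanSpace ℝ (Fin n) → EuclideanSpace ℝ (Fin n))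
    (ρ ω M : ℝ) (hρ : 0 < ρ) (hω : 0 < ω) (hM : 1 ≤ M)
    (hLES : ∀ x : ℝ → EuclideanSpace ℝ (Fin n), IsSolution f D x → ‖x 0‖ ≤ ρ →
      ∀ t ≥ (0:ℝ), ‖x t‖ ≤ M * Real.exp (-ω * t) * ‖x 0‖)
    (σ : ℝ → ℝ → ℝ) (hσ : ClassKL σ)
    (φ : EuclideanSpace ℝ (Fin n) → ℝ)
    (hφc : ContinuousOn φ D) (hφ0 : φ 0 = 0) (hφnn : ∀ x ∈ D, 0 ≤ φ x)
    (hφsize : ∀ r : ℝ, (∃ x ∈ D, φ x < r) → IsCompact {x ∈ D | φ x ≤ r})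
    (hUGAS : ∀ x : ℝ → EuclideanSpace ℝ (Fin n), IsSolution f D x →
      ∀ t ≥ (0:ℝ), ‖x t‖ ≤ σ (φ (x 0)) t) :
    ∃ κ : EuclideanSpace ℝ (Fin n) → ℝ,
      ContinuousOn κ D ∧ κ 0 = 0 ∧ (∀ x ∈ D, 0 ≤ κ x) ∧
      (∀ r : ℝ, (∃ x ∈ D, κ x < r) → IsCompact {x ∈ D | κ x ≤ r}) ∧
      ∀ x : ℝ → EuclideanSpace ℝ (Fin n), IsSolution f D x →
        ∀ t ≥ (0:ℝ), ‖x t‖ ≤ Real.exp (-ω * t) * κ (x 0) := by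
  obtain ⟨T, hTc, hT⟩ := hσ.exists_continuous_settlingTime hρ
  set g := fun z => M * exp (ω * T (φ z)) * σ (φ z) 0
  have hg : ∀ z ∈ D, 0 ≤ g z := fun z hz =>
    mul_nonneg (by positivity) (hσ.nonneg (hφnn z hz) le_rfl)
  have hgc : ContinuousOn g D :=
    (continuousOn_const.mul ((continuous_exp.comp (continuous_const.mul hTc)).comp_continuousOn
      hφc)).mul (hσ.continuousOn_zero_right.comp hφc hφnn)
  refine ⟨g + φ, hgc.add hφc, by simp [g, hφ0, hσ.zero_left], fun z hz => ?_,
    isCompact_sublevel_of_le hφsize (hgc.add hφc) fun z hz => ?_, fun x hx t ht => ?_⟩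
  · exact add_nonneg (hg z hz) (hφnn z hz)
  · exact le_add_of_nonneg_left (hg z hz)
  have hs := hφnn _ (hx.1 0 le_rfl)
  have hbound := norm_le_exp_of_enters_ball hω.le hM hLES hx (hT _ hs).1
    ((hUGAS x hx _ (hT _ hs).1).trans (hT _ hs).2)
    (fun u hu => (hUGAS x hx u hu).trans (hσ.antitone_right hs le_rfl hu)) ht
  exact hbound.trans (by gcongr; exact le_add_of_nonneg_right hs)

theorem stmt19 (n : ℕ) (D : Set (EuclideanSpace ℝ (Fin n))) (hD : IsOpen D)
    (h0 : (0 : EuclideanSpace ℝ (Fin n)) ∈ D)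
    (f : EuclideanSpace ℝ (Fin n) → EuclideanSpace ℝ (Fin n))
    (hf : ∀ x ∈ D, ∃ ε > (0:ℝ), ∃ K : NNReal,
      LipschitzOnWith K f (Metric.ball x ε ∩ D))
    (hf0 : f 0 = 0)
    (ρ ω M : ℝ) (hρ : 0 < ρ) (hω : 0 < ω) (hM : 1 ≤ M)
    (hLES : ∀ x : ℝ → EuclideanSpace ℝ (Fin n), IsSolution f D x → ‖x 0‖ ≤ ρ →
      ∀ t ≥ (0:ℝ), ‖x t‖ ≤ M * Real.exp (-ω * t) * ‖x 0‖)
    (σ : ℝ → ℝ → ℝ) (hσ : ClassKL σ)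
    (φ : EuclideanSpace ℝ (Fin n) → ℝ)
    (hφc : ContinuousOn φ D) (hφ0 : φ 0 = 0) (hφnn : ∀ x ∈ D, 0 ≤ φ x)
    (hφsize : ∀ r : ℝ, (∃ x ∈ D, φ x < r) → IsCompact {x ∈ D | φ x ≤ r})
    (hUGAS : ∀ x : ℝ → EuclideanSpace ℝ (Fin n), IsSolution f D x →
      ∀ t ≥ (0:ℝ), ‖x t‖ ≤ σ (φ (x 0)) t) :
    ∃ κ : EuclideanSpace ℝ (Fin n) → ℝ,
      ContinuousOn κ D ∧ κ 0 = 0 ∧ (∀ x ∈ D, 0 ≤ κ x) ∧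
      (∀ r : ℝ, (∃ x ∈ D, κ x < r) → IsCompact {x ∈ D | κ x ≤ r}) ∧
      ∀ x : ℝ → EuclideanSpace ℝ (Fin n), IsSolution f D x →
        ∀ t ≥ (0:ℝ), ‖x t‖ ≤ Real.exp (-ω * t) * κ (x 0) :=
  stmt19_general n D f ρ ω M hρ hω hM hLES σ hσ φ hφc hφ0 hφnn hφsize hUGAS
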